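/- In CRDA, every child in the rotation set weakly improves: for all c ∈ R_C^t, U_c(μ_t(c)) ≥ U_c(μ_t^M(c)), where μ_t^M(c) is c's match after the initial MATCHING phase and μ_t(c) her match after ROTATION. -/

import Mathlib

/-- A one-to-one (partial) matching between children and homes. -/
structure Matching (C H : Type) where
  toHome : C → Option H
  toChild : H → Option C
  consistent : ∀ c h, toHome c = some h ↔ toChild h = some c

/-- A dynamic matching market: cardinal utilities, arrival times, waiting costs. -/
structure Market (C H : Type) where
  U : C → H → ℝ
  V : H → C → ℝ
  arrC : C → ℕ
  arrH : H → ℕ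
  wC : ℝ
  wH : ℝ

/-- Accept/reject action profiles of homes over time. -/
abbrev Actions (H : Type) := H → ℕ → Bool

/-- A dynamic mechanism: given the homes' action profile, a matching in each period. -/
abbrev Mechanism (C H : Type) := Actions H → ℕ → Matching C H

open scoped Classical in
/-- The counterfactual profile in which home `h` rejects every placement before `t'`,
accepts at `t'`, and otherwise plays as in `a`; all other homes play as in `a`. -/
noncomputable def cfProfile {H : Type} (a : Actions H) (h : H) (t' : ℕ) : Actions H :=
  fun h' k =>
    if h' = h then (if k < t' then false else if k = t' then true else a h' k)
    else a h' k

namespace Market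

variable {C H : Type}

/-- Time-discounted utility of home `h` for child `c` at time `t`:
`V_h^t(c) = V_h(c) - (t - arrival(h)) * w_H`. -/
noncomputable def Vt (M : Market C H) (h : H) (c : C) (t : ℕ) : ℝ :=
  M.V h c - ((t : ℝ) - (M.arrH h : ℝ)) * M.wH

/-- Child `c` is active (present in the market) at time `t`:
she has arrived and no home has yet accepted a placement with her. -/
def activeC (M : Market C H) (Q : Mechanism C H) (a : Actions H) (c : C) (t : ℕ) : Prop :=
  M.arrC c ≤ t ∧ ¬ ∃ k < t, ∃ h, (Q a k).toHome c = some h ∧ a h k = true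

/-- Home `h` is active (present in the market) at time `t`:
it has arrived and has not yet accepted a placement. -/
def activeH (M : Market C H) (Q : Mechanism C H) (a : Actions H) (h : H) (t : ℕ) : Prop :=
  M.arrH h ≤ t ∧ ¬ ∃ k < t, (Q a k).toChild h ≠ none ∧ a h k = true

/-- Admissibility: the mechanism only matches agents active in the current market. -/
def feasible (M : Market C H) (Q : Mechanism C H) : Prop :=
  ∀ a t c h, (Q a t).toHome c = some h → M.activeC Q a c t ∧ M.activeH Q a h t

/-- Child `c` has been adopted (placement accepted) by time `t`. -/
def childAdopted (M : Market C H) (Q : Mechanism C H) (a : Actions H) (c : C) (t : ℕ) : Prop :=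
  ∃ k ≤ t, ∃ h, (Q a k).toHome c = some h ∧ a h k = true

/-- Home `h` has accepted a placement by time `t`. -/
def homeAccepted (M : Market C H) (Q : Mechanism C H) (a : Actions H) (h : H) (t : ℕ) : Prop :=
  ∃ k ≤ t, (Q a k).toChild h ≠ none ∧ a h k = true

/-- Justified envy-freeness at every period and action profile: no mutually matched
child and home both strictly prefer each other to their assigned partners. -/
def justifiedEnvyFree (M : Market C H) (Q : Mechanism C H) : Prop :=
  ∀ a t c h h' c', (Q a t).toHome c = some h' → (Q a t).toChild h = some c' →
    ¬ (M.U c h' < M.U c h ∧ M.V h c' < M.V h c)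

/-- Individual rationality at every period and action profile. -/
def individuallyRational (M : Market C H) (Q : Mechanism C H) : Prop :=
  ∀ a t c h, (Q a t).toHome c = some h → 0 ≤ M.U c h ∧ 0 ≤ M.V h c

/-- Patience-freeness: any placement offered at `t` is weakly better (time-discounted)
than the placement the home would receive at any later `t'` in the counterfactual in
which it rejects all placements before `t'` and accepts at `t'`. -/
noncomputable def patienceFree (M : Market C H) (Q : Mechanism C H) : Prop :=
  ∀ (a : Actions H) (t : ℕ) (h : H) (c : C), (Q a t).toChild h = some c →
    ∀ t' > t, ∀ c', (Q (cfProfile a h t') t').toChild h = some c' →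
      M.Vt h c' t' ≤ M.Vt h c t

/-- Dynamic envy-freeness: justified envy-free, patience-free, individually rational. -/
noncomputable def dynamicEnvyFree (M : Market C H) (Q : Mechanism C H) : Prop :=
  M.justifiedEnvyFree Q ∧ M.patienceFree Q ∧ M.individuallyRational Q

/-- Strict non-wastefulness: after every history and action profile there is never an
active unmatched child and an active unmatched home that find each other acceptable. -/
def strictlyNonWasteful (M : Market C H) (Q : Mechanism C H) : Prop :=
  ∀ a t, ¬ ∃ c h, M.activeC Q a c t ∧ M.activeH Q a h t ∧
    0 ≤ M.U c h ∧ 0 ≤ M.V h c ∧ (Q a t).toHome c = none ∧ (Q a t).toChild h = none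

/-- Weak non-wastefulness: when every home accepts every offered placement,
no mutually acceptable unmatched pair ever remains. -/
def weaklyNonWasteful (M : Market C H) (Q : Mechanism C H) : Prop :=
  ∀ t, ¬ ∃ c h, M.activeC Q (fun _ _ => true) c t ∧ M.activeH Q (fun _ _ => true) h t ∧
    0 ≤ M.U c h ∧ 0 ≤ M.V h c ∧
    (Q (fun _ _ => true) t).toHome c = none ∧ (Q (fun _ _ => true) t).toChild h = none

/-- The mechanism is a deterministic function of the history of markets (active sets)
and past matchings. -/
def historyDetermined (M : Market C H) (Q : Mechanism C H) : Prop :=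
  ∀ a a' t,
    (∀ k ≤ t, ∀ c, M.activeC Q a c k ↔ M.activeC Q a' c k) →
    (∀ k ≤ t, ∀ h, M.activeH Q a h k ↔ M.activeH Q a' h k) →
    (∀ k < t, Q a k = Q a' k) →
    Q a t = Q a' t

/-- `x` is the realized (true-utility, time-discounted) payoff of home `h`:
the time-discounted utility of an accepted placement, or `0` if `h` never accepts. -/
noncomputable def payoffIs (M : Market C H) (Q : Mechanism C H) (a : Actions H)
    (h : H) (x : ℝ) : Prop :=
  (∃ t c, (Q a t).toChild h = some c ∧ a h t = true ∧ x = M.Vt h c t) ∨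
  ((∀ t c, (Q a t).toChild h = some c → a h t = false) ∧ x = 0)

end Market

namespace Market

variable {C H : Type}

/-- Stability (feasibility, individual rationality and no blocking pair) of a matching
on given sets of active children and homes. -/
def IsStableOn (M : Market C H) (aC : Set C) (aH : Set H) (μ : Matching C H) : Prop :=
  (∀ c h, μ.toHome c = some h → c ∈ aC ∧ h ∈ aH ∧ 0 ≤ M.U c h ∧ 0 ≤ M.V h c) ∧
  (∀ c h, c ∈ aC → h ∈ aH → 0 ≤ M.U c h → 0 ≤ M.V h c →
    ¬ ((∀ h', μ.toHome c = some h' → M.U c h' < M.U c h) ∧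
       (∀ c', μ.toChild h = some c' → M.V h c' < M.V h c)))

end Market

namespace Market

variable {C H : Type}

/-- Characterization of the output of child-proposing Deferred Acceptance:
the child-optimal stable matching on the given sets. -/
def IsChildOptimalOn (M : Market C H) (aC : Set C) (aH : Set H) (μ : Matching C H) : Prop :=
  M.IsStableOn aC aH μ ∧
  ∀ μ', M.IsStableOn aC aH μ' → ∀ c h, μ'.toHome c = some h →
    ∃ h', μ.toHome c = some h' ∧ M.U c h ≤ M.U c h'

/-- CRDA's trigger: some home whose most recently rejected placement had
time-discounted value `prev h` gets a strictly better match in the MATCHING phase. -/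
noncomputable def crdaTrigger (M : Market C H) (prev : H → Option ℝ) (t : ℕ)
    (μM : Matching C H) : Prop :=
  ∃ h c b, μM.toChild h = some c ∧ prev h = some b ∧ b < M.Vt h c t

/-- A child is flagged for rotation: some acceptable active home is strictly preferred
to her MATCHING match, or her assigned home improves on its previously rejected placement. -/
noncomputable def crdaFlagged (M : Market C H) (aH : Set H) (prev : H → Option ℝ)
    (t : ℕ) (μM : Matching C H) (c : C) : Prop :=
  (∃ h ∈ aH, 0 ≤ M.V h c ∧ ∀ h', μM.toHome c = some h' → M.U c h' < M.U c h) ∨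
  (∃ h b, μM.toHome c = some h ∧ prev h = some b ∧ b < M.Vt h c t)

/-- The set `\hat R_C^t`: flagged or unmatched active children. -/
noncomputable def crdaHatRC (M : Market C H) (aC : Set C) (aH : Set H)
    (prev : H → Option ℝ) (t : ℕ) (μM : Matching C H) : Set C :=
  {c ∈ aC | M.crdaFlagged aH prev t μM c ∨ μM.toHome c = none}

/-- The set `R_H^t`: active homes matched to flagged children, or unmatched. -/
noncomputable def crdaRH (M : Market C H) (aC : Set C) (aH : Set H)
    (prev : H → Option ℝ) (t : ℕ) (μM : Matching C H) : Set H :=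
  {h ∈ aH | (∃ c ∈ M.crdaHatRC aC aH prev t μM, μM.toChild h = some c) ∨
    μM.toChild h = none}

/-- The set `R_C^t`: children of `\hat R_C^t` weakly below every relevant home's
previously rejected placement value. -/
noncomputable def crdaRC (M : Market C H) (aC : Set C) (aH : Set H)
    (prev : H → Option ℝ) (t : ℕ) (μM : Matching C H) : Set C :=
  {c ∈ M.crdaHatRC aC aH prev t μM |
    ∀ h ∈ M.crdaRH aC aH prev t μM, 0 ≤ M.U c h →
      ∀ b, prev h = some b → M.Vt h c t ≤ b}

/-- One period of Child Rotating Deferred Acceptance on the market given by active sets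
`aC`, `aH`, where `prev h` records the time-discounted value of home `h`'s most recently
rejected placement (if any): first child-proposing DA (`μM`); if triggered, ROTATION
re-runs child-proposing DA (`μR`) on the rotation sets, children excluded from the
rotation set become unmatched, and all other agents keep their MATCHING placements. -/
structure CRDAStep (M : Market C H) (aC : Set C) (aH : Set H)
    (prev : H → Option ℝ) (t : ℕ) where
  μM : Matching C H
  μR : Matching C H
  μ : Matching C H
  matching_opt : M.IsChildOptimalOn aC aH μM
  no_trigger : ¬ M.crdaTrigger prev t μM → μ = μM
  rot_opt : M.crdaTrigger prev t μM →
    M.IsChildOptimalOn (M.crdaRC aC aH prev t μM) (M.crdaRH aC aH prev t μM) μR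
  final_rotC : M.crdaTrigger prev t μM →
    ∀ c ∈ M.crdaRC aC aH prev t μM, μ.toHome c = μR.toHome c
  final_rotH : M.crdaTrigger prev t μM →
    ∀ h ∈ M.crdaRH aC aH prev t μM, μ.toChild h = μR.toChild h
  final_dropC : M.crdaTrigger prev t μM →
    ∀ c ∈ M.crdaHatRC aC aH prev t μM, c ∉ M.crdaRC aC aH prev t μM → μ.toHome c = none
  final_keepC : M.crdaTrigger prev t μM →
    ∀ c ∈ aC, c ∉ M.crdaHatRC aC aH prev t μM → μ.toHome c = μM.toHome c
  final_keepH : M.crdaTrigger prev t μM →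
    ∀ h ∈ aH, h ∉ M.crdaRH aC aH prev t μM → μ.toChild h = μM.toChild h

end Market

/-!
Let `W` be the set of rotated children who end up strictly worse off under ROTATION than under
MATCHING. A child `c ∈ W` is matched in MATCHING to some `h ∈ R_H^t`; since `(c, h)` does not
block the ROTATION outcome, `h` holds there a child `c₁` it strictly prefers to `c`, and since
`(c₁, h)` does not block the MATCHING outcome, `c₁` strictly prefers her MATCHING home to `h`,
so `c₁ ∈ W`. The map `c ↦ c₁` is injective, so on the finite set `W` it is a bijection: the
children of `W` merely permute their MATCHING homes. Giving every child of `W` back her MATCHING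
home then yields a stable matching on the rotation sets, which contradicts the child-optimality
of the ROTATION outcome.
-/

theorem Set.Finite.exists_mem_eq_some_of_partialInjective {α : Type} {S : Set α}
    (hS : S.Finite) {g : α → Option α}
    (hinj : ∀ a b x, g a = some x → g b = some x → a = b)
    (hmaps : ∀ a ∈ S, ∃ b ∈ S, g a = some b) :
    ∀ b ∈ S, ∃ a ∈ S, g a = some b := by
  choose f hfS hf using hmaps
  have : Finite S := hS.to_subtype
  let F : S → S := fun a => ⟨f a a.2, hfS a a.2⟩
  have hF : Function.Injective F := fun a b hab => by
    have hfab : f a a.2 = f b b.2 := congrArg Subtype.val hab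
    exact Subtype.ext (hinj a b _ (hf a a.2) (hfab ▸ hf b b.2))
  intro b hb
  obtain ⟨a, ha⟩ := Finite.surjective_of_injective hF ⟨b, hb⟩
  exact ⟨a, a.2, by rw [hf a a.2]; exact congrArg (some ∘ Subtype.val) ha⟩

namespace Matching

variable {C H : Type} (μ : Matching C H)

theorem eq_of_toHome_eq_some {c c' : C} {h : H} (hc : μ.toHome c = some h)
    (hc' : μ.toHome c' = some h) : c = c' := by
  have e := (μ.consistent c h).1 hc
  rw [(μ.consistent c' h).1 hc'] at e
  exact (Option.some.inj e).symm

theorem eq_of_toChild_eq_some {h h' : H} {c : C} (hh : μ.toChild h = some c)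
    (hh' : μ.toChild h' = some c) : h = h' := by
  have e := (μ.consistent c h).2 hh
  rw [(μ.consistent c h').2 hh'] at e
  exact (Option.some.inj e).symm

theorem mem_iff_exists_toHome_eq_some (S : Set C) {c : C} {h : H} (hc : μ.toHome c = some h) :
    c ∈ S ↔ ∃ c₀ ∈ S, μ.toHome c₀ = some h :=
  ⟨fun hcS => ⟨c, hcS, hc⟩, fun ⟨_, hc₀S, hc₀⟩ => μ.eq_of_toHome_eq_some hc₀ hc ▸ hc₀S⟩

variable {μ}

open Classical in
noncomputable def piecewise (S : Set C) (μ₁ μ₂ : Matching C H)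
    (hS : ∀ h, (∃ c ∈ S, μ₁.toHome c = some h) ↔ (∃ c ∈ S, μ₂.toHome c = some h)) :
    Matching C H where
  toHome c := if c ∈ S then μ₁.toHome c else μ₂.toHome c
  toChild h := if ∃ c ∈ S, μ₁.toHome c = some h then μ₁.toChild h else μ₂.toChild h
  consistent c h := by
    have h₁S : μ₁.toHome c = some h → (c ∈ S ↔ ∃ c₀ ∈ S, μ₁.toHome c₀ = some h) :=
      μ₁.mem_iff_exists_toHome_eq_some S
    have h₂S : μ₂.toHome c = some h → (c ∈ S ↔ ∃ c₀ ∈ S, μ₁.toHome c₀ = some h) :=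
      fun e => (μ₂.mem_iff_exists_toHome_eq_some S e).trans (hS h).symm
    split_ifs with hc hh hh <;> rw [← Matching.consistent]
    · exact iff_of_false (fun e => hh ((h₁S e).1 hc)) (fun e => hh ((h₂S e).1 hc))
    · exact iff_of_false (fun e => hc ((h₂S e).2 hh)) (fun e => hc ((h₁S e).2 hh))

variable {S : Set C} {μ₁ μ₂ : Matching C H}
  {hS : ∀ h, (∃ c ∈ S, μ₁.toHome c = some h) ↔ (∃ c ∈ S, μ₂.toHome c = some h)}

theorem piecewise_toHome_of_mem {c : C} (hc : c ∈ S) :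
    (piecewise S μ₁ μ₂ hS).toHome c = μ₁.toHome c := if_pos hc

theorem piecewise_toHome_of_notMem {c : C} (hc : c ∉ S) :
    (piecewise S μ₁ μ₂ hS).toHome c = μ₂.toHome c := if_neg hc

theorem piecewise_toChild_of_exists {h : H} (hh : ∃ c ∈ S, μ₁.toHome c = some h) :
    (piecewise S μ₁ μ₂ hS).toChild h = μ₁.toChild h := if_pos hh

theorem piecewise_toChild_of_not_exists {h : H} (hh : ¬ ∃ c ∈ S, μ₁.toHome c = some h) :
    (piecewise S μ₁ μ₂ hS).toChild h = μ₂.toChild h := if_neg hh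

end Matching

namespace Market

variable {C H : Type} (M : Market C H)

noncomputable def matchU (μ : Matching C H) (c : C) : ℝ :=
  (μ.toHome c).elim 0 (M.U c)

def ChildPrefers (μ : Matching C H) (c : C) (h : H) : Prop :=
  ∀ h', μ.toHome c = some h' → M.U c h' < M.U c h

def HomePrefers (μ : Matching C H) (h : H) (c : C) : Prop :=
  ∀ c', μ.toChild h = some c' → M.V h c' < M.V h c

def worseOff (R : Set C) (μ μ' : Matching C H) : Set C :=
  {c ∈ R | M.matchU μ' c < M.matchU μ c}

variable {M} {aC RC : Set C} {aH RH : Set H} {μ ν μM μR : Matching C H} {c : C} {h : H}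

theorem matchU_of_toHome_eq_some (hc : μ.toHome c = some h) : M.matchU μ c = M.U c h := by
  simp [matchU, hc]

theorem matchU_of_toHome_eq_none (hc : μ.toHome c = none) : M.matchU μ c = 0 := by
  simp [matchU, hc]

theorem IsStableOn.matchU_nonneg (hμ : M.IsStableOn aC aH μ) (c : C) : 0 ≤ M.matchU μ c := by
  cases hc : μ.toHome c with
  | none => simp [matchU, hc]
  | some h => rw [matchU_of_toHome_eq_some hc]; exact (hμ.1 c h hc).2.2.1

theorem childPrefers_congr (e : μ.toHome c = ν.toHome c) :
    M.ChildPrefers μ c h ↔ M.ChildPrefers ν c h := by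
  simp only [ChildPrefers, e]

theorem homePrefers_congr (e : μ.toChild h = ν.toChild h) :
    M.HomePrefers μ h c ↔ M.HomePrefers ν h c := by
  simp only [HomePrefers, e]

theorem childPrefers_of_matchU_lt (hlt : M.matchU μ c < M.U c h) : M.ChildPrefers μ c h :=
  fun _ hc => matchU_of_toHome_eq_some hc ▸ hlt

theorem ChildPrefers.of_matchU_le (strictU : ∀ c h h', h ≠ h' → M.U c h ≠ M.U c h')
    (hν : M.ChildPrefers ν c h) (hle : M.matchU μ c ≤ M.matchU ν c) (hU : 0 ≤ M.U c h)
    (hne : μ.toHome c ≠ some h) : M.ChildPrefers μ c h := by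
  intro h₁ hμc
  rw [matchU_of_toHome_eq_some hμc] at hle
  cases hνc : ν.toHome c with
  | some h₂ => exact hle.trans_lt (matchU_of_toHome_eq_some hνc ▸ hν h₂ hνc)
  | none =>
    rw [matchU_of_toHome_eq_none hνc] at hle
    exact (hle.trans hU).lt_of_ne (strictU c h₁ h fun e => hne (e ▸ hμc))

theorem IsStableOn.exists_toChild_of_childPrefers (hμ : M.IsStableOn aC aH μ) (hc : c ∈ aC)
    (hh : h ∈ aH) (hU : 0 ≤ M.U c h) (hV : 0 ≤ M.V h c) (hpref : M.ChildPrefers μ c h) :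
    ∃ c', μ.toChild h = some c' ∧ M.V h c ≤ M.V h c' := by
  by_contra! hno
  exact hμ.2 c h hc hh hU hV ⟨hpref, hno⟩

theorem IsStableOn.exists_toHome_of_homePrefers (hμ : M.IsStableOn aC aH μ) (hc : c ∈ aC)
    (hh : h ∈ aH) (hU : 0 ≤ M.U c h) (hV : 0 ≤ M.V h c) (hpref : M.HomePrefers μ h c) :
    ∃ h', μ.toHome c = some h' ∧ M.U c h ≤ M.U c h' := by
  by_contra! hno
  exact hμ.2 c h hc hh hU hV ⟨hno, hpref⟩

theorem exists_mem_worseOff_toHome_eq_of_mem_worseOff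
    (strictU : ∀ c h h', h ≠ h' → M.U c h ≠ M.U c h')
    (strictV : ∀ h c c', c ≠ c' → M.V h c ≠ M.V h c')
    (hM : M.IsStableOn aC aH μM) (hR : M.IsStableOn RC RH μR) (hRC : RC ⊆ aC) (hRH : RH ⊆ aH)
    (hmaps : ∀ c ∈ RC, ∀ h, μM.toHome c = some h → h ∈ RH) (hc : c ∈ M.worseOff RC μM μR) :
    ∃ h, μM.toHome c = some h ∧ ∃ c₁ ∈ M.worseOff RC μM μR, μR.toHome c₁ = some h := by
  obtain ⟨hcR, hlt⟩ := hc
  obtain ⟨h, hMc⟩ : ∃ h, μM.toHome c = some h := Option.ne_none_iff_exists'.1 fun hn =>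
    (hR.matchU_nonneg c).not_gt (matchU_of_toHome_eq_none hn ▸ hlt)
  rw [matchU_of_toHome_eq_some hMc] at hlt
  obtain ⟨-, hh, hU, hV⟩ := hM.1 c h hMc
  have hhR := hmaps c hcR h hMc
  obtain ⟨c₁, hRh, hVle⟩ :=
    hR.exists_toChild_of_childPrefers hcR hhR hU hV (childPrefers_of_matchU_lt hlt)
  have hRc₁ := (μR.consistent c₁ h).2 hRh
  have hne : c ≠ c₁ := by
    rintro rfl
    exact (matchU_of_toHome_eq_some hRc₁ ▸ hlt).false
  obtain ⟨hc₁R, -, hU₁, hV₁⟩ := hR.1 c₁ h hRc₁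
  have hhome : M.HomePrefers μM h c₁ := fun c' hc' => by
    obtain rfl := Option.some.inj (((μM.consistent c h).1 hMc).symm.trans hc')
    exact hVle.lt_of_ne (strictV h c c₁ hne)
  obtain ⟨h₂, hMc₁, hUle⟩ := hM.exists_toHome_of_homePrefers (hRC hc₁R) (hRH hhR) hU₁ hV₁ hhome
  have hh₂ : h ≠ h₂ := by
    rintro rfl
    exact hne (μM.eq_of_toHome_eq_some hMc hMc₁)
  refine ⟨h, hMc, c₁, ⟨hc₁R, ?_⟩, hRc₁⟩
  rw [matchU_of_toHome_eq_some hRc₁, matchU_of_toHome_eq_some hMc₁]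
  exact hUle.lt_of_ne (strictU c₁ h h₂ hh₂)

theorem exists_mem_worseOff_toHome_iff [Finite C]
    (strictU : ∀ c h h', h ≠ h' → M.U c h ≠ M.U c h')
    (strictV : ∀ h c c', c ≠ c' → M.V h c ≠ M.V h c')
    (hM : M.IsStableOn aC aH μM) (hR : M.IsStableOn RC RH μR) (hRC : RC ⊆ aC) (hRH : RH ⊆ aH)
    (hmaps : ∀ c ∈ RC, ∀ h, μM.toHome c = some h → h ∈ RH) (h : H) :
    (∃ c ∈ M.worseOff RC μM μR, μM.toHome c = some h) ↔
      ∃ c ∈ M.worseOff RC μM μR, μR.toHome c = some h := by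
  have step := fun c (hc : c ∈ M.worseOff RC μM μR) =>
    exists_mem_worseOff_toHome_eq_of_mem_worseOff strictU strictV hM hR hRC hRH hmaps hc
  refine ⟨fun ⟨c, hc, hMc⟩ => ?_, fun ⟨c, hc, hRc⟩ => ?_⟩
  · obtain ⟨h', hMc', c₁, hc₁, hRc₁⟩ := step c hc
    obtain rfl := Option.some.inj (hMc.symm.trans hMc')
    exact ⟨c₁, hc₁, hRc₁⟩
  · have hinj : ∀ a b x, (μM.toHome a).bind μR.toChild = some x →
        (μM.toHome b).bind μR.toChild = some x → a = b := by
      intro a b x ha hb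
      obtain ⟨ha', hMa, hRa⟩ := Option.bind_eq_some_iff.1 ha
      obtain ⟨hb', hMb, hRb⟩ := Option.bind_eq_some_iff.1 hb
      exact μM.eq_of_toHome_eq_some hMa (μR.eq_of_toChild_eq_some hRb hRa ▸ hMb)
    have hmapsTo : ∀ a ∈ M.worseOff RC μM μR,
        ∃ b ∈ M.worseOff RC μM μR, (μM.toHome a).bind μR.toChild = some b := by
      intro a ha
      obtain ⟨h, hMa, c₁, hc₁, hRc₁⟩ := step a ha
      exact ⟨c₁, hc₁, by simp [hMa, (μR.consistent c₁ h).1 hRc₁]⟩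
    obtain ⟨c₀, hc₀, hg⟩ :=
      (Set.toFinite _).exists_mem_eq_some_of_partialInjective hinj hmapsTo c hc
    obtain ⟨h₀, hMc₀, hRh₀⟩ := Option.bind_eq_some_iff.1 hg
    obtain rfl := Option.some.inj (((μR.consistent c h₀).2 hRh₀).symm.trans hRc)
    exact ⟨c₀, hc₀, hMc₀⟩

theorem isStableOn_piecewise_worseOff (strictU : ∀ c h h', h ≠ h' → M.U c h ≠ M.U c h')
    (hM : M.IsStableOn aC aH μM) (hR : M.IsStableOn RC RH μR) (hRC : RC ⊆ aC) (hRH : RH ⊆ aH)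
    (hmaps : ∀ c ∈ RC, ∀ h, μM.toHome c = some h → h ∈ RH)
    (hS : ∀ h, (∃ c ∈ M.worseOff RC μM μR, μM.toHome c = some h) ↔
      ∃ c ∈ M.worseOff RC μM μR, μR.toHome c = some h) :
    M.IsStableOn RC RH (Matching.piecewise (M.worseOff RC μM μR) μM μR hS) := by
  set W := M.worseOff RC μM μR
  constructor
  · intro c h hνc
    by_cases hcW : c ∈ W
    · rw [Matching.piecewise_toHome_of_mem hcW] at hνc
      exact ⟨hcW.1, hmaps c hcW.1 h hνc, (hM.1 c h hνc).2.2⟩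
    · rw [Matching.piecewise_toHome_of_notMem hcW] at hνc
      exact hR.1 c h hνc
  rintro c h hcR hhR hU hV ⟨hc, hh⟩
  by_cases hhW : ∃ c₀ ∈ W, μM.toHome c₀ = some h
  · refine hM.2 c h (hRC hcR) (hRH hhR) hU hV
      ⟨?_, (homePrefers_congr (Matching.piecewise_toChild_of_exists hhW)).1 hh⟩
    by_cases hcW : c ∈ W
    · exact (childPrefers_congr (Matching.piecewise_toHome_of_mem hcW)).1 hc
    · exact ((childPrefers_congr (Matching.piecewise_toHome_of_notMem hcW)).1 hc).of_matchU_le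
        strictU (not_lt.1 fun hlt => hcW ⟨hcR, hlt⟩) hU
        fun e => hcW ((μM.mem_iff_exists_toHome_eq_some W e).2 hhW)
  · refine hR.2 c h hcR hhR hU hV
      ⟨?_, (homePrefers_congr (Matching.piecewise_toChild_of_not_exists hhW)).1 hh⟩
    by_cases hcW : c ∈ W
    · exact ((childPrefers_congr (Matching.piecewise_toHome_of_mem hcW)).1 hc).of_matchU_le
        strictU hcW.2.le hU fun e => hhW ((hS h).2 ⟨c, hcW, e⟩)
    · exact (childPrefers_congr (Matching.piecewise_toHome_of_notMem hcW)).1 hc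

theorem matchU_le_of_isChildOptimalOn [Finite C]
    (strictU : ∀ c h h', h ≠ h' → M.U c h ≠ M.U c h')
    (strictV : ∀ h c c', c ≠ c' → M.V h c ≠ M.V h c')
    (hM : M.IsStableOn aC aH μM) (hRC : RC ⊆ aC) (hRH : RH ⊆ aH)
    (hmaps : ∀ c ∈ RC, ∀ h, μM.toHome c = some h → h ∈ RH)
    (hRopt : M.IsChildOptimalOn RC RH μR) (hc : c ∈ RC) :
    M.matchU μM c ≤ M.matchU μR c := by
  by_contra! hlt
  have hcW : c ∈ M.worseOff RC μM μR := ⟨hc, hlt⟩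
  have hS := exists_mem_worseOff_toHome_iff strictU strictV hM hRopt.1 hRC hRH hmaps
  have hν := isStableOn_piecewise_worseOff strictU hM hRopt.1 hRC hRH hmaps hS
  obtain ⟨h, hMc, -⟩ :=
    exists_mem_worseOff_toHome_eq_of_mem_worseOff strictU strictV hM hRopt.1 hRC hRH hmaps hcW
  obtain ⟨h', hRc, hle⟩ :=
    hRopt.2 _ hν c h ((Matching.piecewise_toHome_of_mem hcW).trans hMc)
  rw [matchU_of_toHome_eq_some hMc, matchU_of_toHome_eq_some hRc] at hlt
  exact hle.not_gt hlt

variable {prev : H → Option ℝ} {t : ℕ}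

theorem crdaRC_subset : M.crdaRC aC aH prev t μM ⊆ aC := fun _ hc => hc.1.1

theorem crdaRH_subset : M.crdaRH aC aH prev t μM ⊆ aH := fun _ hh => hh.1

theorem mem_crdaRH_of_toHome_eq_some (hM : M.IsStableOn aC aH μM)
    (hc : c ∈ M.crdaRC aC aH prev t μM) (hMc : μM.toHome c = some h) :
    h ∈ M.crdaRH aC aH prev t μM :=
  ⟨(hM.1 c h hMc).2.1, Or.inl ⟨c, hc.1, (μM.consistent c h).1 hMc⟩⟩

end Market

theorem crda_rotation_weakly_improves_general {C H : Type} [Finite C]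
    (M : Market C H) (aC : Set C) (aH : Set H) (prev : H → Option ℝ) (t : ℕ)
    (S : Market.CRDAStep M aC aH prev t)
    (strictU : ∀ c h h', h ≠ h' → M.U c h ≠ M.U c h')
    (strictV : ∀ h c c', c ≠ c' → M.V h c ≠ M.V h c')
    (htrig : M.crdaTrigger prev t S.μM)
    (c : C) (hc : c ∈ M.crdaRC aC aH prev t S.μM) :
    (S.μM.toHome c).elim (0 : ℝ) (M.U c) ≤ (S.μ.toHome c).elim (0 : ℝ) (M.U c) := by
  rw [S.final_rotC htrig c hc]
  exact Market.matchU_le_of_isChildOptimalOn strictU strictV S.matching_opt.1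
    Market.crdaRC_subset Market.crdaRH_subset
    (fun _ hc' _ => Market.mem_crdaRH_of_toHome_eq_some S.matching_opt.1 hc')
    (S.rot_opt htrig) hc

/-- The rotation-improvement lemma: in any triggered period of CRDA, every child in the
rotation set `R_C^t` weakly improves on her MATCHING-phase placement. -/
theorem crda_rotation_weakly_improves {C H : Type} [Finite C] [Finite H]
    (M : Market C H) (aC : Set C) (aH : Set H) (prev : H → Option ℝ) (t : ℕ)
    (S : Market.CRDAStep M aC aH prev t)
    (strictU : ∀ c h h', h ≠ h' → M.U c h ≠ M.U c h')
    (strictV : ∀ h c c', c ≠ c' → M.V h c ≠ M.V h c')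
    (htrig : M.crdaTrigger prev t S.μM)
    (c : C) (hc : c ∈ M.crdaRC aC aH prev t S.μM) :
    (S.μM.toHome c).elim (0 : ℝ) (M.U c) ≤ (S.μ.toHome c).elim (0 : ℝ) (M.U c) :=
  crda_rotation_weakly_improves_general M aC aH prev t S strictU strictV htrig c hc
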